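/- arXiv:2502.16011 — 3 statements merged into one kernel-verified Lean document; each statement's English description precedes it below -/
import Mathlib

section
/- Lefschetz zeta function of a cyclic permutative map on a wedge sum: in the cyclic algebraic model, the identity ((1 − t)·ζ_f(t))^s = (1 − t^s)^s · ∏_{i=1}^s ζ_{f_ii^s}(t^s) holds in the ring ℚ[[t]] of formal power series (this is the paper's formula ζ_f(t) = ((1−t^s)/(1−t)) · (∏_{i=1}^s ζ_{f_ii^s}(t^s))^{1/s}, with both sides raised to the power s). -/
/-! `(1 - t) ζ_f(t) = exp ∑ (L(f^m) - 1) t^m/m`, since `1 - t = exp(-∑ t^m/m)`, so both sides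
are exponentials and it suffices to compare exponents. Because `F_k` permutes the blocks
cyclically, the diagonal blocks of `F_k^m` vanish unless `s ∣ m`, so `L(f^m) = 1` for `s ∤ m`;
and since a trace is the sum of the traces of the diagonal blocks,
`∑_i (L(f_ii^m) - 1) = L(f^m) - 1` for every `m`. After substituting `t^s` for `t`, the
exponents agree term by term. -/

/-- The exponential `exp(f) = ∑_{j ≥ 0} f^j / j!` of a formal power series `f ∈ ℚ[[t]]`
(intended for series with zero constant term). -/
noncomputable def expPS (f : PowerSeries ℚ) : PowerSeries ℚ :=
  PowerSeries.mk fun n =>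
    PowerSeries.coeff n (∑ j ∈ Finset.range (n + 1), (j.factorial : ℚ)⁻¹ • f ^ j)

/-- The Lefschetz zeta function `ζ(t) = exp(∑_{m ≥ 1} L(m)·t^m/m) ∈ ℚ[[t]]` of a sequence of
Lefschetz numbers `L : ℕ → ℚ`. -/
noncomputable def lefschetzZeta (L : ℕ → ℚ) : PowerSeries ℚ :=
  expPS (PowerSeries.mk fun m => if m = 0 then 0 else L m / (m : ℚ))

/-- Substitution of `t^d` for `t` in a formal power series `g(t) ∈ ℚ[[t]]`: the series
`g(t^d)`. -/
noncomputable def substPow (d : ℕ) (g : PowerSeries ℚ) : PowerSeries ℚ :=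
  PowerSeries.mk fun n => if d ∣ n then PowerSeries.coeff (n / d) g else 0

open PowerSeries

namespace PowerSeries

theorem eq_of_derivative_mul_eq {K : Type*} [Field K] [CharZero K] {P Q : K⟦X⟧}
    (hQ : constantCoeff Q ≠ 0) (h0 : constantCoeff P = constantCoeff Q)
    (h : d⁄dX K P * Q = P * d⁄dX K Q) : P = Q := by
  have hQQ : Q * Q⁻¹ = 1 := PowerSeries.mul_inv_cancel Q hQ
  have hquot : P * Q⁻¹ = 1 := by
    refine derivative.ext ?_ ?_
    · rw [Derivation.leibniz, derivative_inv', derivative_one, smul_eq_mul, smul_eq_mul]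
      linear_combination Q⁻¹ ^ 2 * h - Q⁻¹ * d⁄dX K P * hQQ
    · rw [map_mul, map_one, constantCoeff_inv, h0, mul_inv_cancel₀ hQ]
  linear_combination Q * hquot - P * hQQ

theorem coeff_pow_eq_zero_of_lt {R : Type*} [CommSemiring R] {f : R⟦X⟧}
    (hf : constantCoeff f = 0) {n j : ℕ} (h : n < j) : coeff n (f ^ j) = 0 :=
  X_pow_dvd_iff.1 (pow_dvd_pow_of_dvd (X_dvd_iff.2 hf) j) n h

end PowerSeries

theorem expPS_eq_subst {f : ℚ⟦X⟧} (hf : constantCoeff f = 0) : expPS f = (exp ℚ).subst f := by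
  ext n
  rw [coeff_subst' (HasSubst.of_constantCoeff_zero' hf), expPS, coeff_mk, map_sum,
    finsum_eq_sum_of_support_subset (s := Finset.range (n + 1))]
  · refine Finset.sum_congr rfl fun j _ => ?_
    simp [coeff_exp]
  · intro j hj
    simp only [Function.mem_support, Finset.coe_range, Set.mem_Iio] at hj ⊢
    by_contra hjn
    exact hj (by rw [coeff_pow_eq_zero_of_lt hf (by omega), smul_zero])

theorem constantCoeff_expPS (f : ℚ⟦X⟧) : constantCoeff (expPS f) = 1 := by
  rw [← coeff_zero_eq_constantCoeff_apply, expPS, coeff_mk]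
  simp

theorem derivative_expPS {f : ℚ⟦X⟧} (hf : constantCoeff f = 0) :
    d⁄dX ℚ (expPS f) = d⁄dX ℚ f * expPS f := by
  rw [expPS_eq_subst hf, derivative_subst (HasSubst.of_constantCoeff_zero' hf), derivative_exp,
    mul_comm]

theorem eq_expPS_of_derivative_eq {f E : ℚ⟦X⟧} (hf : constantCoeff f = 0)
    (hE0 : constantCoeff E = 1) (hE : d⁄dX ℚ E = d⁄dX ℚ f * E) : E = expPS f :=
  eq_of_derivative_mul_eq (by simp [constantCoeff_expPS]) (by rw [hE0, constantCoeff_expPS])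
    (by rw [hE, derivative_expPS hf]; ring)

theorem expPS_add {f g : ℚ⟦X⟧} (hf : constantCoeff f = 0) (hg : constantCoeff g = 0) :
    expPS (f + g) = expPS f * expPS g := by
  refine (eq_expPS_of_derivative_eq (by simp [hf, hg]) (by simp [constantCoeff_expPS]) ?_).symm
  rw [Derivation.leibniz, smul_eq_mul, smul_eq_mul, derivative_expPS hf, derivative_expPS hg,
    map_add]
  ring

theorem expPS_sum {ι : Type*} (t : Finset ι) {f : ι → ℚ⟦X⟧}
    (hf : ∀ i ∈ t, constantCoeff (f i) = 0) :
    expPS (∑ i ∈ t, f i) = ∏ i ∈ t, expPS (f i) := by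
  induction t using Finset.cons_induction with
  | empty => exact (eq_expPS_of_derivative_eq (by simp) (by simp) (by simp)).symm
  | cons a t ha ih =>
    rw [Finset.forall_mem_cons] at hf
    rw [Finset.sum_cons, Finset.prod_cons,
      expPS_add hf.1 (by rw [map_sum]; exact Finset.sum_eq_zero hf.2), ih hf.2]

theorem expPS_nsmul {f : ℚ⟦X⟧} (hf : constantCoeff f = 0) (n : ℕ) :
    expPS (n • f) = expPS f ^ n := by
  simpa using expPS_sum (Finset.range n) (f := fun _ => f) (by simp [hf])

theorem expand_expPS {f : ℚ⟦X⟧} (hf : constantCoeff f = 0) {p : ℕ} (hp : p ≠ 0) :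
    expand p hp (expPS f) = expPS (expand p hp f) := by
  rw [expPS_eq_subst hf, expPS_eq_subst (by simpa using hf)]
  exact expand_subst p hp (HasSubst.of_constantCoeff_zero' hf) _

theorem substPow_eq_expand {d : ℕ} (hd : d ≠ 0) (g : ℚ⟦X⟧) : substPow d g = expand d hd g := by
  ext n
  rw [substPow, coeff_mk, coeff_expand]

noncomputable def lefschetzLog : (ℕ → ℚ) →+ ℚ⟦X⟧ :=
  AddMonoidHom.mk' (fun a => mk fun m => if m = 0 then 0 else a m / m) fun a b => by
    ext m
    simp only [coeff_mk, map_add, Pi.add_apply]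
    split_ifs <;> ring

theorem coeff_lefschetzLog (a : ℕ → ℚ) (m : ℕ) :
    coeff m (lefschetzLog a) = if m = 0 then 0 else a m / m := by
  simp [lefschetzLog]

theorem constantCoeff_lefschetzLog (a : ℕ → ℚ) : constantCoeff (lefschetzLog a) = 0 := by
  rw [← coeff_zero_eq_constantCoeff_apply, coeff_lefschetzLog, if_pos rfl]

theorem lefschetzZeta_eq_expPS (L : ℕ → ℚ) : lefschetzZeta L = expPS (lefschetzLog L) := rfl

theorem derivative_lefschetzLog_one : d⁄dX ℚ (lefschetzLog 1) = mk 1 := by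
  ext n
  rw [coeff_derivative, coeff_lefschetzLog, if_neg n.succ_ne_zero, coeff_mk]
  simp only [Pi.one_apply, Nat.cast_add_one]
  field_simp

theorem one_sub_X_eq_expPS : (1 - X : ℚ⟦X⟧) = expPS (-lefschetzLog 1) := by
  refine eq_expPS_of_derivative_eq (by simp [constantCoeff_lefschetzLog]) (by simp) ?_
  rw [map_neg, derivative_lefschetzLog_one, neg_mul, mk_one_mul_one_sub_eq_one, map_sub,
    derivative_one, derivative_X, zero_sub]

theorem one_sub_X_mul_lefschetzZeta (L : ℕ → ℚ) :
    (1 - X) * lefschetzZeta L = expPS (lefschetzLog (L - 1)) := by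
  rw [one_sub_X_eq_expPS, lefschetzZeta_eq_expPS,
    ← expPS_add (by simp [constantCoeff_lefschetzLog]) (constantCoeff_lefschetzLog L), map_sub,
    neg_add_eq_sub]

theorem expand_lefschetzLog_comp_mul {p : ℕ} (hp : p ≠ 0) {b : ℕ → ℚ}
    (hb : ∀ n, ¬ p ∣ n → b n = 0) :
    expand p hp (lefschetzLog fun m => b (p * m)) = p • lefschetzLog b := by
  ext n
  rw [coeff_expand, map_nsmul, coeff_lefschetzLog, coeff_lefschetzLog, nsmul_eq_mul]
  by_cases hpn : p ∣ n
  · obtain ⟨m, rfl⟩ := hpn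
    rw [if_pos (dvd_mul_right p m), Nat.mul_div_cancel_left m (Nat.pos_of_ne_zero hp)]
    rcases eq_or_ne m 0 with rfl | hm
    · simp
    · rw [if_neg hm, if_neg (mul_ne_zero hp hm)]
      push_cast
      field_simp
  · rw [if_neg hpn, hb n hpn]
    simp

section BlockMaps

variable {R ι : Type*} [CommRing R] [DecidableEq ι] {M : ι → Type*}
  [∀ i, AddCommGroup (M i)] [∀ i, Module R (M i)]

theorem LinearMap.trace_pi_eq_sum [Fintype ι] [∀ i, Module.Free R (M i)]
    [∀ i, Module.Finite R (M i)]    (G : (Π i, M i) →ₗ[R] Π i, M i) :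
    trace R _ G = ∑ i, trace R (M i) (proj i ∘ₗ G ∘ₗ single R M i) := by
  have hG : G = ∑ i, (G ∘ₗ single R M i) ∘ₗ proj i := by
    refine LinearMap.ext fun x => ?_
    simp only [LinearMap.sum_apply, LinearMap.comp_apply, LinearMap.proj_apply,
      LinearMap.coe_single, ← map_sum, LinearMap.sum_single_apply]
  conv_lhs => rw [hG]
  rw [map_sum]
  exact Finset.sum_congr rfl fun i _ => trace_comp_comm' (proj i) (G ∘ₗ single R M i)

variable {σ : Equiv.Perm ι} {F : (Π i, M i) →ₗ[R] Π i, M i}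

theorem pow_apply_single_apply_eq_zero
    (hF : ∀ i (v : M i), ∃ w, F (Pi.single i v) = Pi.single (σ i) w)
    (m : ℕ) (i : ι) (v : M i) {j : ι} (hj : j ≠ (σ ^ m) i) : (F ^ m) (Pi.single i v) j = 0 := by
  induction m generalizing i v with
  | zero => exact Pi.single_eq_of_ne hj v
  | succ m ih =>
    obtain ⟨w, hw⟩ := hF i v
    rw [pow_succ, Module.End.mul_apply, hw]
    exact ih (σ i) w (by rwa [pow_succ, Equiv.Perm.mul_apply] at hj)

theorem trace_pow_eq_zero_of_forall_ne [Fintype ι] [∀ i, Module.Free R (M i)]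
    [∀ i, Module.Finite R (M i)]    (hF : ∀ i (v : M i), ∃ w, F (Pi.single i v) = Pi.single (σ i) w)
    {m : ℕ} (hm : ∀ i, (σ ^ m) i ≠ i) : LinearMap.trace R _ (F ^ m) = 0 := by
  rw [LinearMap.trace_pi_eq_sum]
  refine Finset.sum_eq_zero fun i _ => ?_
  convert LinearMap.map_zero _
  refine LinearMap.ext fun v => ?_
  exact pow_apply_single_apply_eq_zero hF m i v (hm i).symm

end BlockMaps

theorem stmt5_general (s N : ℕ) (hs : 1 ≤ s)
    (σ : Equiv.Perm (Fin s))
    (hσ : ∀ (i : Fin s) (m : ℕ), (σ ^ m) i = i ↔ s ∣ m)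
    (V : Fin s → Fin N → Type*)
    [∀ i k, AddCommGroup (V i k)] [∀ i k, Module ℚ (V i k)]
    [∀ i k, FiniteDimensional ℚ (V i k)]
    (A : ∀ i k, V i k →ₗ[ℚ] V (σ i) k)
    (F : ∀ k, (Π i, V i k) →ₗ[ℚ] (Π i, V i k))
    (hF : ∀ k (i : Fin s) (v : V i k), F k (Pi.single i v) = Pi.single (σ i) (A i k v))
    (L : ℕ → ℚ)
    (hL : ∀ m, L m =
      1 + ∑ k : Fin N, (-1 : ℚ) ^ ((k : ℕ) + 1) *
        LinearMap.trace ℚ (Π i, V i k) ((F k) ^ m))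
    (Lc : Fin s → ℕ → ℚ)
    (hLc : ∀ i m, Lc i m =
      1 + ∑ k : Fin N, (-1 : ℚ) ^ ((k : ℕ) + 1) *
        LinearMap.trace ℚ (V i k)
          ((LinearMap.proj i) ∘ₗ ((F k) ^ m) ∘ₗ (LinearMap.single ℚ (fun j => V j k) i))) :
    ((1 - PowerSeries.X) * lefschetzZeta L) ^ s =
      (1 - PowerSeries.X ^ s) ^ s *
        ∏ i : Fin s, substPow s (lefschetzZeta (fun m => Lc i (s * m))) := by
  have hs0 : s ≠ 0 := Nat.one_le_iff_ne_zero.mp hs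
  have hsum : ∀ m, ∑ i, (Lc i m - 1) = L m - 1 := by
    intro m
    simp only [hLc, hL, add_sub_cancel_left, LinearMap.trace_pi_eq_sum, Finset.mul_sum]
    exact Finset.sum_comm
  have hfix : ∀ m, ¬ s ∣ m → (L - 1) m = 0 := by
    intro m hm
    rw [Pi.sub_apply, Pi.one_apply, hL, add_sub_cancel_left]
    refine Finset.sum_eq_zero fun k _ => ?_
    rw [trace_pow_eq_zero_of_forall_ne (fun i v => ⟨A i k v, hF k i v⟩)
      fun i h => hm ((hσ i m).mp h), mul_zero]
  have hlog : s • lefschetzLog (L - 1) =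
      expand s hs0 (lefschetzLog (∑ i, ((fun m => Lc i (s * m)) - 1))) := by
    rw [← expand_lefschetzLog_comp_mul hs0 hfix]
    congr 2
    ext m
    simp [hsum]
  calc ((1 - X) * lefschetzZeta L) ^ s
      = expand s hs0 (expPS (lefschetzLog (∑ i, ((fun m => Lc i (s * m)) - 1)))) := by
        rw [one_sub_X_mul_lefschetzZeta, ← expPS_nsmul (constantCoeff_lefschetzLog _), hlog,
          expand_expPS (constantCoeff_lefschetzLog _)]
    _ = expand s hs0 (∏ i, (1 - X) * lefschetzZeta (fun m => Lc i (s * m))) := by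
        rw [map_sum, expPS_sum _ fun i _ => constantCoeff_lefschetzLog _]
        simp only [one_sub_X_mul_lefschetzZeta]
    _ = _ := by
        rw [Finset.prod_mul_distrib, Finset.prod_const, Finset.card_univ, Fintype.card_fin,
          map_mul, map_pow, map_sub, map_one, expand_X, map_prod]
        simp only [substPow_eq_expand hs0]

/-- **Lefschetz zeta function of a cyclic permutative squared-by-blocks map on a wedge sum.**
In the cyclic algebraic model (see the hypotheses: `σ` a single `s`-cycle, `F k` the
block-permutation endomorphism of `⊕_i V i k` built from the maps `A i k : V i k → V (σ i) k`),
with Lefschetz numbers `L m = 1 + ∑_{k=1}^N (-1)^k tr(F_k^m)` and coordinate Lefschetz numbers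
`Lc i m = 1 + ∑_{k=1}^N (-1)^k tr(π_{i,k} ∘ F_k^m ∘ ι_{i,k})`, the zeta function
`ζ_f(t) = exp(∑_{m≥1} L(f^m) t^m/m)` satisfies
`((1 − t)·ζ_f(t))^s = (1 − t^s)^s · ∏_{i=1}^s ζ_{f_ii^s}(t^s)` in `ℚ[[t]]`, where
`ζ_{f_ii^s}(t^s)` is `exp(∑_{m≥1} L(f_ii^{sm}) t^m/m)` with `t^s` substituted for `t`. -/
theorem stmt5 (s N : ℕ) (hs : 1 ≤ s) (hN : 1 ≤ N)
    (σ : Equiv.Perm (Fin s))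
    (hσ : ∀ (i : Fin s) (m : ℕ), (σ ^ m) i = i ↔ s ∣ m)
    (V : Fin s → Fin N → Type*)
    [∀ i k, AddCommGroup (V i k)] [∀ i k, Module ℚ (V i k)]
    [∀ i k, FiniteDimensional ℚ (V i k)]
    (hdim : ∀ (i i' : Fin s) (k : Fin N),
      Module.finrank ℚ (V i k) = Module.finrank ℚ (V i' k))
    (A : ∀ i k, V i k →ₗ[ℚ] V (σ i) k)
    (F : ∀ k, (Π i, V i k) →ₗ[ℚ] (Π i, V i k))
    (hF : ∀ k (i : Fin s) (v : V i k), F k (Pi.single i v) = Pi.single (σ i) (A i k v))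
    (L : ℕ → ℚ)
    (hL : ∀ m, L m =
      1 + ∑ k : Fin N, (-1 : ℚ) ^ ((k : ℕ) + 1) *
        LinearMap.trace ℚ (Π i, V i k) ((F k) ^ m))
    (Lc : Fin s → ℕ → ℚ)
    (hLc : ∀ i m, Lc i m =
      1 + ∑ k : Fin N, (-1 : ℚ) ^ ((k : ℕ) + 1) *
        LinearMap.trace ℚ (V i k)
          ((LinearMap.proj i) ∘ₗ ((F k) ^ m) ∘ₗ (LinearMap.single ℚ (fun j => V j k) i))) :
    ((1 - PowerSeries.X) * lefschetzZeta L) ^ s =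
      (1 - PowerSeries.X ^ s) ^ s *
        ∏ i : Fin s, substPow s (lefschetzZeta (fun m => Lc i (s * m))) :=
  stmt5_general s N hs σ hσ V A F hF L hL Lc hLc
end

section
/- Vanishing of Dold coefficients off the multiples of the cycle lengths: in the permutative algebraic model, if m > 1 and m is not divisible by s_j for any j ∈ {1,…,q}, then ℓ(f^m) = 0. -/
/-! If `s_j ∤ m` for every cycle length `s_j` of `σ`, then no power `σ ^ r` with `r ∣ m` has a
fixed point. Each `F_k ^ r` then maps every summand `V i k` into a different summand
`V ((σ ^ r) i) k`, so all its diagonal blocks vanish and `tr (F_k ^ r) = 0`. Hence `L(f^r) = 1`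
for every divisor `r` of `m`, and `ℓ(f^m) = ∑_{r ∣ m} μ(m/r) = 0` because `m > 1`. -/

open Function Finset

theorem Finset.card_eq_minimalPeriod_of_mem_iff {α : Type*} [DecidableEq α] {f : α → α} {x : α}
    (hx : x ∈ periodicPts f) {S : Finset α} (hS : ∀ y, y ∈ S ↔ ∃ n, f^[n] x = y) :
    #S = minimalPeriod f x := by
  have hS_eq : S = ((List.range (minimalPeriod f x)).map fun n => f^[n] x).toFinset := by
    ext y
    rw [hS, List.mem_toFinset, ← mem_periodicOrbit_iff hx]
    rfl
  rw [hS_eq, List.toFinset_card_of_nodup (Cycle.nodup_coe_iff.1 nodup_periodicOrbit),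
    List.length_map, List.length_range]

theorem Equiv.Perm.card_dvd_of_pow_apply_eq_self {α : Type*} [DecidableEq α] {σ : Equiv.Perm α}
    {S : Finset α} {i : α} (hS : ∀ y, y ∈ S ↔ ∃ n : ℕ, (σ ^ n) i = y) {r : ℕ} (hr : 0 < r)
    (h : (σ ^ r) i = i) : #S ∣ r := by
  have hper : IsPeriodicPt σ r i := by rwa [IsPeriodicPt, IsFixedPt, Equiv.Perm.iterate_eq_pow]
  rw [Finset.card_eq_minimalPeriod_of_mem_iff ⟨r, hr, hper⟩
    (by simpa only [Equiv.Perm.iterate_eq_pow])]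
  exact hper.minimalPeriod_dvd

section PermutesBlocks

variable {R ι : Type*} {M : ι → Type*} [DecidableEq ι]

def PermutesBlocks [Semiring R] [∀ i, AddCommMonoid (M i)] [∀ i, Module R (M i)]
    (σ : Equiv.Perm ι) (F : (Π i, M i) →ₗ[R] Π i, M i) : Prop :=
  ∀ i (v : M i), ∃ w : M (σ i), F (Pi.single i v) = Pi.single (σ i) w

namespace PermutesBlocks

variable [Semiring R] [∀ i, AddCommMonoid (M i)] [∀ i, Module R (M i)]
  {σ τ : Equiv.Perm ι} {F G : (Π i, M i) →ₗ[R] Π i, M i}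

theorem one : PermutesBlocks (1 : Equiv.Perm ι) (1 : (Π i, M i) →ₗ[R] Π i, M i) :=
  fun _ v => ⟨v, rfl⟩

theorem mul (hG : PermutesBlocks τ G) (hF : PermutesBlocks σ F) :
    PermutesBlocks (τ * σ) (G * F) := by
  intro i v
  obtain ⟨w, hw⟩ := hF i v
  obtain ⟨u, hu⟩ := hG (σ i) w
  exact ⟨u, by rw [Module.End.mul_apply, hw, hu]; rfl⟩

theorem pow (hF : PermutesBlocks σ F) (r : ℕ) : PermutesBlocks (σ ^ r) (F ^ r) := by
  induction r with
  | zero => exact one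
  | succ r ih => rw [pow_succ', pow_succ']; exact hF.mul ih

theorem proj_comp_comp_single_eq_zero (hF : PermutesBlocks σ F) {i : ι} (hi : σ i ≠ i) :
    LinearMap.proj i ∘ₗ F ∘ₗ LinearMap.single R M i = 0 := by
  ext v : 1
  obtain ⟨w, hw⟩ := hF i v
  simp [hw, Pi.single_eq_of_ne hi.symm]

end PermutesBlocks

theorem LinearMap.trace_pi_eq_sum_trace_proj_comp_comp_single [CommRing R] [Fintype ι]
    [∀ i, AddCommGroup (M i)] [∀ i, Module R (M i)] [∀ i, Module.Free R (M i)]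
    [∀ i, Module.Finite R (M i)] (T : (Π i, M i) →ₗ[R] Π i, M i) :
    trace R _ T = ∑ i, trace R (M i) (proj i ∘ₗ T ∘ₗ single R M i) := by
  have hT : T = ∑ i, T ∘ₗ single R M i ∘ₗ proj i := by
    refine LinearMap.ext fun x => ?_
    simp only [sum_apply, comp_apply, proj_apply, coe_single]
    rw [← map_sum, Finset.univ_sum_single]
  conv_lhs => rw [hT]
  rw [map_sum]
  refine Finset.sum_congr rfl fun i _ => ?_
  rw [← comp_assoc, trace_comp_comm']

theorem PermutesBlocks.trace_eq_zero [CommRing R] [Fintype ι] [∀ i, AddCommGroup (M i)]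
    [∀ i, Module R (M i)] [∀ i, Module.Free R (M i)] [∀ i, Module.Finite R (M i)]
    {σ : Equiv.Perm ι} {F : (Π i, M i) →ₗ[R] Π i, M i} (hF : PermutesBlocks σ F)
    (hσ : ∀ i, σ i ≠ i) : LinearMap.trace R _ F = 0 := by
  rw [LinearMap.trace_pi_eq_sum_trace_proj_comp_comp_single]
  exact Finset.sum_eq_zero fun i _ => by
    rw [hF.proj_comp_comp_single_eq_zero (hσ i), map_zero]

end PermutesBlocks

theorem Nat.sum_divisors_moebius_div_mul_eq_zero {R : Type*} [Ring R] {m : ℕ} (hm : m ≠ 1)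
    {L : ℕ → R} {c : R} (hL : ∀ r ∈ m.divisors, L r = c) :
    ∑ r ∈ m.divisors, ((ArithmeticFunction.moebius (m / r) : ℤ) : R) * L r = 0 := by
  have hμ : ∑ r ∈ m.divisors, (ArithmeticFunction.moebius r : ℤ) = 0 := by
    have h := congrArg (· m) ArithmeticFunction.moebius_mul_coe_zeta
    rwa [ArithmeticFunction.coe_mul_zeta_apply, ArithmeticFunction.one_apply, if_neg hm] at h
  rw [Finset.sum_congr rfl fun r hr => by rw [hL r hr], ← Finset.sum_mul,
    Nat.sum_div_divisors m fun r => ((ArithmeticFunction.moebius r : ℤ) : R), ← Int.cast_sum, hμ,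
    Int.cast_zero, zero_mul]

theorem stmt11_general (s N q : ℕ)
(σ : Equiv.Perm (Fin s))
    (Λ : Fin q → Finset (Fin s))
    (hΛorb : ∀ j, ∀ i ∈ Λ j, ∀ i', i' ∈ Λ j ↔ ∃ m : ℕ, (σ ^ m) i = i')
    (hΛcover : ∀ i, ∃ j, i ∈ Λ j)
    (sVec : Fin q → ℕ) (hsVec : ∀ j, sVec j = (Λ j).card)
    (V : Fin s → Fin N → Type*)
    [∀ i k, AddCommGroup (V i k)] [∀ i k, Module ℚ (V i k)]
    [∀ i k, FiniteDimensional ℚ (V i k)]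
    (A : ∀ i k, V i k →ₗ[ℚ] V (σ i) k)
    (F : ∀ k, (Π i, V i k) →ₗ[ℚ] (Π i, V i k))
    (hF : ∀ k (i : Fin s) (v : V i k), F k (Pi.single i v) = Pi.single (σ i) (A i k v))
    (L : ℕ → ℚ)
    (hL : ∀ m, L m =
      1 + ∑ k : Fin N, (-1 : ℚ) ^ ((k : ℕ) + 1) *
        LinearMap.trace ℚ (Π i, V i k) ((F k) ^ m))
    (ℓ : ℕ → ℚ)
    (hℓ : ∀ m, ℓ m = ∑ r ∈ m.divisors, ((ArithmeticFunction.moebius (m / r) : ℤ) : ℚ) * L r) :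
    ∀ m, 1 < m → (∀ j : Fin q, ¬ sVec j ∣ m) → ℓ m = 0 := by
  intro m hm hnd
  have hfree : ∀ r ∈ m.divisors, ∀ i, (σ ^ r) i ≠ i := by
    intro r hr i hfix
    obtain ⟨j, hij⟩ := hΛcover i
    have hcard := Equiv.Perm.card_dvd_of_pow_apply_eq_self (hΛorb j i hij)
      (Nat.pos_of_mem_divisors hr) hfix
    exact hnd j (hsVec j ▸ hcard.trans (Nat.dvd_of_mem_divisors hr))
  have hblocks : ∀ k, PermutesBlocks σ (F k) := fun k i v => ⟨A i k v, hF k i v⟩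
  have hL1 : ∀ r ∈ m.divisors, L r = 1 := fun r hr => by
    simp [hL, fun k => ((hblocks k).pow r).trace_eq_zero (hfree r hr)]
  rw [hℓ]
  exact Nat.sum_divisors_moebius_div_mul_eq_zero (by omega) hL1

/-- **Vanishing of Dold coefficients off the multiples of the cycle lengths.**
In the permutative algebraic model (`σ` a permutation of `{1,…,s}` with orbits
`Λ 1, …, Λ q` of cardinalities `s₁,…,s_q`; `F k` the block-permutation endomorphism of
`⊕_i V i k` built from the maps `A i k : V i k → V (σ i) k`), with Lefschetz numbers
`L m = 1 + ∑_{k=1}^N (-1)^k tr(F_k^m)` and Dold coefficients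
`ℓ(f^m) = ∑_{r∣m} μ(m/r)·L(f^r)`: if `m > 1` and `s_j ∤ m` for every
`j ∈ {1,…,q}`, then `ℓ(f^m) = 0`. -/
theorem stmt11 (s N q : ℕ) (hs : 1 ≤ s) (hN : 1 ≤ N)
(σ : Equiv.Perm (Fin s))
    (Λ : Fin q → Finset (Fin s))
    (hΛorb : ∀ j, ∀ i ∈ Λ j, ∀ i', i' ∈ Λ j ↔ ∃ m : ℕ, (σ ^ m) i = i')
    (hΛne : ∀ j, (Λ j).Nonempty)
    (hΛcover : ∀ i, ∃ j, i ∈ Λ j)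
    (hΛdisj : ∀ j j', j ≠ j' → Disjoint (Λ j) (Λ j'))
    (sVec : Fin q → ℕ) (hsVec : ∀ j, sVec j = (Λ j).card)
    (V : Fin s → Fin N → Type*)
    [∀ i k, AddCommGroup (V i k)] [∀ i k, Module ℚ (V i k)]
    [∀ i k, FiniteDimensional ℚ (V i k)]
    (hdim : ∀ (k : Fin N) (i i' : Fin s), (∃ m : ℕ, (σ ^ m) i = i') →
      Module.finrank ℚ (V i k) = Module.finrank ℚ (V i' k))
    (A : ∀ i k, V i k →ₗ[ℚ] V (σ i) k)
    (F : ∀ k, (Π i, V i k) →ₗ[ℚ] (Π i, V i k))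
    (hF : ∀ k (i : Fin s) (v : V i k), F k (Pi.single i v) = Pi.single (σ i) (A i k v))
    (L : ℕ → ℚ)
    (hL : ∀ m, L m =
      1 + ∑ k : Fin N, (-1 : ℚ) ^ ((k : ℕ) + 1) *
        LinearMap.trace ℚ (Π i, V i k) ((F k) ^ m))
    (Lc : Fin s → ℕ → ℚ)
    (hLc : ∀ i m, Lc i m =
      1 + ∑ k : Fin N, (-1 : ℚ) ^ ((k : ℕ) + 1) *
        LinearMap.trace ℚ (V i k)
          ((LinearMap.proj i) ∘ₗ ((F k) ^ m) ∘ₗ (LinearMap.single ℚ (fun j => V j k) i)))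
    (ℓ : ℕ → ℚ)
    (hℓ : ∀ m, ℓ m = ∑ r ∈ m.divisors, ((ArithmeticFunction.moebius (m / r) : ℤ) : ℚ) * L r)
    (ℓc : Fin s → ℕ → ℚ)
    (hℓc : ∀ i m, ℓc i m =
      ∑ r ∈ m.divisors, ((ArithmeticFunction.moebius (m / r) : ℤ) : ℚ) * Lc i r) :
    ∀ m, 1 < m → (∀ j : Fin q, ¬ sVec j ∣ m) → ℓ m = 0 :=
  stmt11_general s N q σ Λ hΛorb hΛcover sVec hsVec V A F hF L hL ℓ hℓ
end

section
/- Same-sign criterion for algebraic periods: in the permutative algebraic model, let m > 1 be such that ℓ(f_ii^m) ≠ 0 for at least one i ∈ {1,…,s}, and such that all the nonzero numbers among ℓ(f_11^m),…,ℓ(f_ss^m) have the same sign (there are no i, i' with ℓ(f_ii^m) > 0 > ℓ(f_{i'i'}^m)). Then ℓ(f^m) ≠ 0, i.e. m ∈ APer_L(f). -/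
/-!
Since `tr F = ∑ᵢ tr (πᵢ ∘ F ∘ ιᵢ)` for an endomorphism of a finite direct sum, summing the
coordinate Lefschetz numbers gives `∑ᵢ L(f_ii^r) = L(f^r) + (s - 1)`. The Möbius transform kills
constants in every degree `m > 1`, so `ℓ(f^m) = ∑ᵢ ℓ(f_ii^m)`, and a sum of numbers of one sign,
not all zero, is nonzero.
-/

open scoped ArithmeticFunction.Moebius

namespace LinearMap

theorem trace_eq_sum_trace_proj_comp_single {R ι : Type*} [CommRing R] [Fintype ι]
    [DecidableEq ι] (M : ι → Type*) [∀ i, AddCommGroup (M i)] [∀ i, Module R (M i)]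
    [∀ i, Module.Free R (M i)] [∀ i, Module.Finite R (M i)] (g : (Π i, M i) →ₗ[R] Π i, M i) :
    trace R _ g = ∑ i, trace R (M i) (proj i ∘ₗ g ∘ₗ single R M i) := by
  have hg : g = ∑ i, (g ∘ₗ single R M i) ∘ₗ proj i := by
    ext x
    simp only [sum_apply, comp_apply, proj_apply, single_apply, ← map_sum, Finset.univ_sum_single]
  conv_lhs => rw [hg]
  exact (map_sum _ _ _).trans (Finset.sum_congr rfl fun i _ => trace_comp_comm' _ _)

end LinearMap

namespace ArithmeticFunction

theorem sum_divisors_moebius_eq_zero (R : Type*) [Ring R] {n : ℕ}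
    (hn : n ≠ 1) : ∑ d ∈ n.divisors, ((μ d : ℤ) : R) = 0 := by
  have h := congrArg (· n) moebius_mul_coe_zeta
  simp only [coe_mul_zeta_apply, one_apply_ne hn] at h
  rw [← Int.cast_sum, h, Int.cast_zero]

end ArithmeticFunction

def doldCoeff {R : Type*} [Ring R] (L : ℕ → R) (m : ℕ) : R :=
  ∑ r ∈ m.divisors, ((μ (m / r) : ℤ) : R) * L r

section doldCoeff

variable {R : Type*} [Ring R]

theorem doldCoeff_sum {ι : Type*} (s : Finset ι) (L : ι → ℕ → R) (m : ℕ) :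
    doldCoeff (fun r => ∑ i ∈ s, L i r) m = ∑ i ∈ s, doldCoeff (L i) m := by
  simp only [doldCoeff, Finset.mul_sum]
  exact Finset.sum_comm

theorem doldCoeff_add_const (L : ℕ → R) (c : R) {m : ℕ} (hm : m ≠ 1) :
    doldCoeff (fun r => L r + c) m = doldCoeff L m := by
  have hμ : ∑ r ∈ m.divisors, ((μ (m / r) : ℤ) : R) = 0 := by
    rw [Nat.sum_div_divisors m fun d => ((μ d : ℤ) : R)]
    exact ArithmeticFunction.sum_divisors_moebius_eq_zero R hm
  simp only [doldCoeff, mul_add, Finset.sum_add_distrib, ← Finset.sum_mul, hμ, zero_mul,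
    add_zero]

end doldCoeff

theorem Finset.sum_ne_zero_of_not_opposite_signs {ι R : Type*} [Fintype ι] [AddCommGroup R]
    [LinearOrder R] [IsOrderedAddMonoid R] {f : ι → R} (hne : ∃ i, f i ≠ 0)
    (hsign : ¬ ∃ i j, 0 < f i ∧ f j < 0) : ∑ i, f i ≠ 0 := by
  push Not at hsign
  obtain ⟨i₀, hi₀⟩ := hne
  rcases hi₀.lt_or_gt with hneg | hpos
  · refine (Finset.sum_neg' (fun i _ => ?_) ⟨i₀, Finset.mem_univ _, hneg⟩).ne
    exact not_lt.mp fun h => (hsign i i₀ h).not_gt hneg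
  · refine (Finset.sum_pos' (fun i _ => ?_) ⟨i₀, Finset.mem_univ _, hpos⟩).ne'
    exact not_lt.mp fun h => (hsign i₀ i hpos).not_gt h

theorem stmt12_general (s N : ℕ)
    (V : Fin s → Fin N → Type*)
    [∀ i k, AddCommGroup (V i k)] [∀ i k, Module ℚ (V i k)]
    [∀ i k, FiniteDimensional ℚ (V i k)]
    (F : ∀ k, (Π i, V i k) →ₗ[ℚ] (Π i, V i k))
    (L : ℕ → ℚ)
    (hL : ∀ m, L m =
      1 + ∑ k : Fin N, (-1 : ℚ) ^ ((k : ℕ) + 1) *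
        LinearMap.trace ℚ (Π i, V i k) ((F k) ^ m))
    (Lc : Fin s → ℕ → ℚ)
    (hLc : ∀ i m, Lc i m =
      1 + ∑ k : Fin N, (-1 : ℚ) ^ ((k : ℕ) + 1) *
        LinearMap.trace ℚ (V i k)
          ((LinearMap.proj i) ∘ₗ ((F k) ^ m) ∘ₗ (LinearMap.single ℚ (fun j => V j k) i)))
    (ℓ : ℕ → ℚ)
    (hℓ : ∀ m, ℓ m = ∑ r ∈ m.divisors, ((ArithmeticFunction.moebius (m / r) : ℤ) : ℚ) * L r)
    (ℓc : Fin s → ℕ → ℚ)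
    (hℓc : ∀ i m, ℓc i m =
      ∑ r ∈ m.divisors, ((ArithmeticFunction.moebius (m / r) : ℤ) : ℚ) * Lc i r) :
    ∀ m, 1 < m → (∃ i : Fin s, ℓc i m ≠ 0) →
      (¬ ∃ i i' : Fin s, 0 < ℓc i m ∧ ℓc i' m < 0) →
      ℓ m ≠ 0 := by
  intro m hm hne hsign
  have hLc_sum : ∀ r, ∑ i, Lc i r = L r + (s - 1) := by
    intro r
    simp only [hLc, hL, Finset.sum_add_distrib, Finset.sum_const, Finset.card_univ, Fintype.card_fin,
      nsmul_eq_mul, mul_one, LinearMap.trace_eq_sum_trace_proj_comp_single (fun j => V j _),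
      Finset.mul_sum]
    rw [Finset.sum_comm]
    ring
  have hℓ_sum : ℓ m = ∑ i, ℓc i m := calc
    ℓ m = doldCoeff (fun r => L r + (s - 1)) m := by
      rw [hℓ, doldCoeff_add_const L _ hm.ne']; rfl
    _ = ∑ i, ℓc i m := by
      simp only [← hLc_sum]
      rw [doldCoeff_sum]
      simp only [hℓc, doldCoeff]
  exact hℓ_sum ▸ Finset.sum_ne_zero_of_not_opposite_signs hne hsign

/-- **Same-sign criterion for algebraic periods.**
In the permutative algebraic model (`σ` a permutation of `{1,…,s}` with orbits
`Λ 1, …, Λ q`; `F k` the block-permutation endomorphism of `⊕_i V i k` built from the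
maps `A i k : V i k → V (σ i) k`), with Lefschetz numbers `L`, coordinate Lefschetz
numbers `Lc` and Dold coefficients `ℓ`, `ℓc` as below: if `m > 1`, some coordinate
Dold coefficient `ℓ(f_ii^m)` is nonzero, and there are no `i, i'` with
`ℓ(f_ii^m) > 0 > ℓ(f_{i'i'}^m)` (all nonzero coordinate Dold coefficients of order `m`
have the same sign), then `ℓ(f^m) ≠ 0`, i.e. `m ∈ APer_L(f)`. -/
theorem stmt12 (s N q : ℕ) (hs : 1 ≤ s) (hN : 1 ≤ N)
(σ : Equiv.Perm (Fin s))
    (Λ : Fin q → Finset (Fin s))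
    (hΛorb : ∀ j, ∀ i ∈ Λ j, ∀ i', i' ∈ Λ j ↔ ∃ m : ℕ, (σ ^ m) i = i')
    (hΛne : ∀ j, (Λ j).Nonempty)
    (hΛcover : ∀ i, ∃ j, i ∈ Λ j)
    (hΛdisj : ∀ j j', j ≠ j' → Disjoint (Λ j) (Λ j'))
    (sVec : Fin q → ℕ) (hsVec : ∀ j, sVec j = (Λ j).card)
    (V : Fin s → Fin N → Type*)
    [∀ i k, AddCommGroup (V i k)] [∀ i k, Module ℚ (V i k)]
    [∀ i k, FiniteDimensional ℚ (V i k)]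
    (hdim : ∀ (k : Fin N) (i i' : Fin s), (∃ m : ℕ, (σ ^ m) i = i') →
      Module.finrank ℚ (V i k) = Module.finrank ℚ (V i' k))
    (A : ∀ i k, V i k →ₗ[ℚ] V (σ i) k)
    (F : ∀ k, (Π i, V i k) →ₗ[ℚ] (Π i, V i k))
    (hF : ∀ k (i : Fin s) (v : V i k), F k (Pi.single i v) = Pi.single (σ i) (A i k v))
    (L : ℕ → ℚ)
    (hL : ∀ m, L m =
      1 + ∑ k : Fin N, (-1 : ℚ) ^ ((k : ℕ) + 1) *
        LinearMap.trace ℚ (Π i, V i k) ((F k) ^ m))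
    (Lc : Fin s → ℕ → ℚ)
    (hLc : ∀ i m, Lc i m =
      1 + ∑ k : Fin N, (-1 : ℚ) ^ ((k : ℕ) + 1) *
        LinearMap.trace ℚ (V i k)
          ((LinearMap.proj i) ∘ₗ ((F k) ^ m) ∘ₗ (LinearMap.single ℚ (fun j => V j k) i)))
    (ℓ : ℕ → ℚ)
    (hℓ : ∀ m, ℓ m = ∑ r ∈ m.divisors, ((ArithmeticFunction.moebius (m / r) : ℤ) : ℚ) * L r)
    (ℓc : Fin s → ℕ → ℚ)
    (hℓc : ∀ i m, ℓc i m =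
      ∑ r ∈ m.divisors, ((ArithmeticFunction.moebius (m / r) : ℤ) : ℚ) * Lc i r) :
    ∀ m, 1 < m → (∃ i : Fin s, ℓc i m ≠ 0) →
      (¬ ∃ i i' : Fin s, 0 < ℓc i m ∧ ℓc i' m < 0) →
      ℓ m ≠ 0 :=
  stmt12_general s N V F L hL Lc hLc ℓ hℓ ℓc hℓc
end
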